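/- arXiv:1009.5664 — 2 statements merged into one kernel-verified Lean document; each statement's English description precedes it below -/
import Mathlib

section
/- Theorem 1.C. Let β ∈ [0,1], n ∈ ℕ, and let Δ̲ : {k ∈ ℕ₀^({0,1}²) : k₊₊ = n} → [−1,1] be a lower β-confidence bound for the parameter q ↦ q₀₁ − q₁₀ in the multinomial model M (equivalently, for the corresponding parameters in P₂ and P_{2,≤}). If Δ̲ is an admissible lower β-confidence bound for one of the estimation problems (M, q ↦ q₀₁ − q₁₀) and (P₂, (π,χ) ↦ π₁·(χ^{(2)}_{1|1} − χ^{(1)}_{1|1}) − (1−π₁)·(χ^{(2)}_{0|0} − χ^{(1)}_{0|0})), then it is admissible for the other, and also for (P_{2,≤}, (π,χ) ↦ π₁·(χ^{(2)}_{1|1} − χ^{(1)}_{1|1})). -/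
open scoped BigOperators

noncomputable section

/-- `p` is a discrete probability density on the finite set `X`,
i.e. a function `X → [0,1]` summing to `1`. -/
def IsProb {X : Type*} [Fintype X] (p : X → ℝ) : Prop :=
  (∀ x, 0 ≤ p x ∧ p x ≤ 1) ∧ ∑ x, p x = 1

/-- `χ` is a Markov transition density: `χ x` is a probability density for each `x`. -/
def IsMarkov {X Y : Type*} [Fintype Y] (χ : X → Y → ℝ) : Prop :=
  ∀ x, IsProb (χ x)

/-- The mixture density `μ₁(π,χ)` on `{0,1}` (indices: `χ i j = χ_{j|i}`). -/
def mu1 (π : Fin 2 → ℝ) (χ : Fin 2 → Fin 2 → ℝ) : Fin 2 → ℝ :=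
  fun j => ∑ i, π i * χ i j

/-- The mixture density `μ₂(π,χ)` on `{0,1}²` (indices: `χ i j = χ_{j|i}`). -/
def mu2 (π : Fin 2 → ℝ) (χ : Fin 2 → Fin 2 × Fin 2 → ℝ) : Fin 2 × Fin 2 → ℝ :=
  fun j => ∑ i, π i * χ i j

/-- First-test characteristic: `chi1 χ i ι = χ^{(1)}_{ι|i} = χ_{ι0|i} + χ_{ι1|i}`. -/
def chi1 (χ : Fin 2 → Fin 2 × Fin 2 → ℝ) : Fin 2 → Fin 2 → ℝ :=
  fun i ι => χ i (ι, 0) + χ i (ι, 1)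

/-- Second-test characteristic: `chi2 χ i ι = χ^{(2)}_{ι|i} = χ_{0ι|i} + χ_{1ι|i}`. -/
def chi2 (χ : Fin 2 → Fin 2 × Fin 2 → ℝ) : Fin 2 → Fin 2 → ℝ :=
  fun i ι => χ i (0, ι) + χ i (1, ι)

/-- The multinomial point mass `M_{n,q}({k}) = n! ∏_x q_x^{k_x}/k_x!`. -/
def mPMF {X : Type*} [Fintype X] (n : ℕ) (q : X → ℝ) (k : X → ℕ) : ℝ :=
  (n.factorial : ℝ) * ∏ x, q x ^ k x / ((k x).factorial : ℝ)

/-- `mProb n q S` is the probability, under the multinomial distribution `M_{n,q}`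
(supported on `{k : Σ_x k_x = n}`), of the event `S`. -/
def mProb {X : Type*} [Fintype X] (n : ℕ) (q : X → ℝ) (S : Set (X → ℕ)) : ℝ :=
  ∑' k : X → ℕ, Set.indicator {k | (∑ x, k x) = n ∧ k ∈ S} (mPMF n q) k


/-- The parameter `q ↦ q₀₁ - q₁₀` in the multinomial model. -/
def kapM (q : Fin 2 × Fin 2 → ℝ) : ℝ := q (0, 1) - q (1, 0)

/-- The parameter `(π,χ) ↦ π₁(Se₂-Se₁) - (1-π₁)(Sp₂-Sp₁)` in the full latent class
model. -/
def kapF (π : Fin 2 → ℝ) (χ : Fin 2 → Fin 2 × Fin 2 → ℝ) : ℝ :=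
  π 1 * (chi2 χ 1 1 - chi1 χ 1 1) - (1 - π 1) * (chi2 χ 0 0 - chi1 χ 0 0)

/-- The parameter `(π,χ) ↦ π₁(Se₂-Se₁)` in the restricted latent class model. -/
def kapR (π : Fin 2 → ℝ) (χ : Fin 2 → Fin 2 × Fin 2 → ℝ) : ℝ :=
  π 1 * (chi2 χ 1 1 - chi1 χ 1 1)

/-- Lower β-confidence bound for `(M, kapM)`. -/
def LowerCBM (β : ℝ) (n : ℕ) (Δ : ((Fin 2 × Fin 2) → ℕ) → ℝ) : Prop :=
  ∀ q : Fin 2 × Fin 2 → ℝ, IsProb q → β ≤ mProb n q {k | Δ k ≤ kapM q}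

/-- Lower β-confidence bound for `(P₂, kapF)`. -/
def LowerCBF (β : ℝ) (n : ℕ) (Δ : ((Fin 2 × Fin 2) → ℕ) → ℝ) : Prop :=
  ∀ π : Fin 2 → ℝ, ∀ χ : Fin 2 → Fin 2 × Fin 2 → ℝ, IsProb π → IsMarkov χ →
    β ≤ mProb n (mu2 π χ) {k | Δ k ≤ kapF π χ}

/-- Lower β-confidence bound for `(P₂≤, kapR)`. -/
def LowerCBR (β : ℝ) (n : ℕ) (Δ : ((Fin 2 × Fin 2) → ℕ) → ℝ) : Prop :=
  ∀ π : Fin 2 → ℝ, ∀ χ : Fin 2 → Fin 2 × Fin 2 → ℝ, IsProb π → IsMarkov χ →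
    chi1 χ 0 0 ≤ chi2 χ 0 0 →
    β ≤ mProb n (mu2 π χ) {k | Δ k ≤ kapR π χ}

/-- `Δ` is worse than `Δ'` for `(M, kapM)`. -/
def WorseM (n : ℕ) (Δ Δ' : ((Fin 2 × Fin 2) → ℕ) → ℝ) : Prop :=
  ∀ q : Fin 2 × Fin 2 → ℝ, IsProb q → ∀ t : ℝ, t < kapM q →
    mProb n q {k | t ≤ Δ k} ≤ mProb n q {k | t ≤ Δ' k}

/-- `Δ` is strictly worse than `Δ'` for `(M, kapM)`. -/
def StrictlyWorseM (n : ℕ) (Δ Δ' : ((Fin 2 × Fin 2) → ℕ) → ℝ) : Prop :=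
  WorseM n Δ Δ' ∧ ∃ q : Fin 2 × Fin 2 → ℝ, IsProb q ∧ ∃ t : ℝ, t < kapM q ∧
    mProb n q {k | t ≤ Δ k} < mProb n q {k | t ≤ Δ' k}

/-- `Δ` is worse than `Δ'` for `(P₂, kapF)`. -/
def WorseF (n : ℕ) (Δ Δ' : ((Fin 2 × Fin 2) → ℕ) → ℝ) : Prop :=
  ∀ π : Fin 2 → ℝ, ∀ χ : Fin 2 → Fin 2 × Fin 2 → ℝ, IsProb π → IsMarkov χ →
    ∀ t : ℝ, t < kapF π χ →
      mProb n (mu2 π χ) {k | t ≤ Δ k} ≤ mProb n (mu2 π χ) {k | t ≤ Δ' k}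

/-- `Δ` is strictly worse than `Δ'` for `(P₂, kapF)`. -/
def StrictlyWorseF (n : ℕ) (Δ Δ' : ((Fin 2 × Fin 2) → ℕ) → ℝ) : Prop :=
  WorseF n Δ Δ' ∧ ∃ π : Fin 2 → ℝ, ∃ χ : Fin 2 → Fin 2 × Fin 2 → ℝ,
    IsProb π ∧ IsMarkov χ ∧ ∃ t : ℝ, t < kapF π χ ∧
      mProb n (mu2 π χ) {k | t ≤ Δ k} < mProb n (mu2 π χ) {k | t ≤ Δ' k}

/-- `Δ` is worse than `Δ'` for `(P₂≤, kapR)`. -/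
def WorseR (n : ℕ) (Δ Δ' : ((Fin 2 × Fin 2) → ℕ) → ℝ) : Prop :=
  ∀ π : Fin 2 → ℝ, ∀ χ : Fin 2 → Fin 2 × Fin 2 → ℝ, IsProb π → IsMarkov χ →
    chi1 χ 0 0 ≤ chi2 χ 0 0 → ∀ t : ℝ, t < kapR π χ →
      mProb n (mu2 π χ) {k | t ≤ Δ k} ≤ mProb n (mu2 π χ) {k | t ≤ Δ' k}

/-- `Δ` is strictly worse than `Δ'` for `(P₂≤, kapR)`. -/
def StrictlyWorseR (n : ℕ) (Δ Δ' : ((Fin 2 × Fin 2) → ℕ) → ℝ) : Prop :=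
  WorseR n Δ Δ' ∧ ∃ π : Fin 2 → ℝ, ∃ χ : Fin 2 → Fin 2 × Fin 2 → ℝ,
    IsProb π ∧ IsMarkov χ ∧ chi1 χ 0 0 ≤ chi2 χ 0 0 ∧ ∃ t : ℝ, t < kapR π χ ∧
      mProb n (mu2 π χ) {k | t ≤ Δ k} < mProb n (mu2 π χ) {k | t ≤ Δ' k}

/-- Admissibility for `(M, kapM)`: `Δ` is a lower β-confidence bound and no lower
β-confidence bound is strictly better. -/
def AdmissibleM (β : ℝ) (n : ℕ) (Δ : ((Fin 2 × Fin 2) → ℕ) → ℝ) : Prop :=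
  LowerCBM β n Δ ∧ ¬ ∃ Δ' : ((Fin 2 × Fin 2) → ℕ) → ℝ,
    LowerCBM β n Δ' ∧ StrictlyWorseM n Δ Δ'

/-- Admissibility for `(P₂, kapF)`. -/
def AdmissibleF (β : ℝ) (n : ℕ) (Δ : ((Fin 2 × Fin 2) → ℕ) → ℝ) : Prop :=
  LowerCBF β n Δ ∧ ¬ ∃ Δ' : ((Fin 2 × Fin 2) → ℕ) → ℝ,
    LowerCBF β n Δ' ∧ StrictlyWorseF n Δ Δ'

/-- Admissibility for `(P₂≤, kapR)`. -/
def AdmissibleR (β : ℝ) (n : ℕ) (Δ : ((Fin 2 × Fin 2) → ℕ) → ℝ) : Prop :=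
  LowerCBR β n Δ ∧ ¬ ∃ Δ' : ((Fin 2 × Fin 2) → ℕ) → ℝ,
    LowerCBR β n Δ' ∧ StrictlyWorseR n Δ Δ'

/-!
Every multinomial law `q` is `μ₂(π, χ)` for `π = (0, 1)` and `χ_{·|1} = q`, and
`kapF π χ = kapM (μ₂(π, χ))`; so `(M, kapM)` and `(P₂, kapF)` have the same confidence bounds and
the same comparisons between them. On `P₂,≤` one only has `kapM ∘ μ₂ ≤ kapR`. A bound `Δ'` strictly
better than `Δ` there is a confidence bound for `M` no worse than `Δ`, so admissibility of `Δ` for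
`M` forces `P_q(t ≤ Δ) = P_q(t ≤ Δ')` whenever `t < kapM q`. Both sides are polynomials in `q`
and, for `t < 1`, `{kapM > t}` is a nonempty relatively open part of the simplex, so the equality
holds for every `q`, contradicting strictness.
-/

open Finset Polynomial

section Multinomial

variable {α : Type*} [Fintype α]

lemma mProb_eq_sum [DecidableEq α] (n : ℕ) (q : α → ℝ) (S : Set (α → ℕ)) :
    mProb n q S = ∑ k ∈ piAntidiag univ n, S.indicator (mPMF n q) k := by
  rw [mProb, tsum_eq_sum (s := piAntidiag univ n)]
  · refine Finset.sum_congr rfl fun k hk => ?_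
    have hk : ∑ x, k x = n := by simpa using hk
    by_cases hkS : k ∈ S <;> simp [hkS, hk]
  · intro k hk
    exact Set.indicator_of_notMem (fun h => hk (by simpa using h.1)) _

lemma mPMF_nonneg {n : ℕ} {q : α → ℝ} (hq : ∀ x, 0 ≤ q x) (k : α → ℕ) : 0 ≤ mPMF n q k :=
  mul_nonneg n.factorial.cast_nonneg <| prod_nonneg fun x _ => by have := hq x; positivity

lemma mProb_mono {n : ℕ} {q : α → ℝ} (hq : IsProb q) {S T : Set (α → ℕ)} (hST : S ⊆ T) :
    mProb n q S ≤ mProb n q T := by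
  classical
  rw [mProb_eq_sum, mProb_eq_sum]
  exact Finset.sum_le_sum fun k _ =>
    Set.indicator_le_indicator_of_subset hST (mPMF_nonneg fun x => (hq.1 x).1) k

lemma exists_polynomial_eval_eq_mProb (n : ℕ) (a b : α → ℝ) (S : Set (α → ℕ)) :
    ∃ P : ℝ[X], ∀ s : ℝ, P.eval s = mProb n (a + s • b) S := by
  classical
  refine ⟨∑ k ∈ piAntidiag univ n with k ∈ S,
      C (n.factorial : ℝ) * ∏ x, (C (a x) + C (b x) * X) ^ k x * C ((k x).factorial : ℝ)⁻¹,
    fun s => ?_⟩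
  rw [mProb_eq_sum, Finset.sum_filter, eval_finsetSum]
  refine Finset.sum_congr rfl fun k _ => ?_
  by_cases hkS : k ∈ S <;> simp [hkS, mPMF, div_eq_mul_inv, eval_prod, mul_comm s]

lemma mProb_line_eq_of_eqOn_Ioo (n : ℕ) (a b : α → ℝ) (S T : Set (α → ℕ)) {c : ℝ} (hc : 0 < c)
    (h : ∀ s ∈ Set.Ioo 0 c, mProb n (a + s • b) S = mProb n (a + s • b) T) (s : ℝ) :
    mProb n (a + s • b) S = mProb n (a + s • b) T := by
  obtain ⟨P, hP⟩ := exists_polynomial_eval_eq_mProb n a b S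
  obtain ⟨Q, hQ⟩ := exists_polynomial_eval_eq_mProb n a b T
  have hPQ : P = Q := eq_of_infinite_eval_eq P Q <|
    (Set.Ioo_infinite hc).mono fun s hs => by simp [hP, hQ, h s hs]
  rw [← hP, ← hQ, hPQ]

lemma isProb_single [DecidableEq α] (x : α) : IsProb (Pi.single x (1 : ℝ)) := by
  refine ⟨fun y => ?_, by simp⟩
  by_cases h : y = x <;> simp [h]

lemma IsProb.add_smul_sub {p q : α → ℝ} (hp : IsProb p) (hq : IsProb q) {s : ℝ}
    (hs : s ∈ Set.Icc (0 : ℝ) 1) : IsProb (p + s • (q - p)) := by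
  refine ⟨fun x => ?_, ?_⟩
  · have := hp.1 x; have := hq.1 x
    simp only [Pi.add_apply, Pi.smul_apply, Pi.sub_apply, smul_eq_mul]
    constructor <;> nlinarith [hs.1, hs.2]
  · simp [Finset.sum_add_distrib, ← Finset.mul_sum, hp.2, hq.2]

end Multinomial

lemma kapM_add_smul (p r : Fin 2 × Fin 2 → ℝ) (s : ℝ) : kapM (p + s • r) = kapM p + s * kapM r := by
  simp only [kapM, Pi.add_apply, Pi.smul_apply, smul_eq_mul]; ring

lemma kapM_sub (p r : Fin 2 × Fin 2 → ℝ) : kapM (p - r) = kapM p - kapM r := by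
  simp only [kapM, Pi.sub_apply]; ring

lemma kapM_single : kapM (Pi.single (0, 1) 1) = 1 := by
  simp [kapM]

lemma IsProb.kapM_mem_Icc {q : Fin 2 × Fin 2 → ℝ} (hq : IsProb q) :
    kapM q ∈ Set.Icc (-1 : ℝ) 1 := by
  have hsum : q (0, 0) + q (0, 1) + (q (1, 0) + q (1, 1)) = 1 := by
    simpa [Fintype.sum_prod_type, Fin.sum_univ_two] using hq.2
  have := hq.1 (0, 0); have := hq.1 (0, 1); have := hq.1 (1, 0); have := hq.1 (1, 1)
  constructor <;> simp only [kapM] <;> linarith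

lemma isProb_mu2 {π : Fin 2 → ℝ} {χ : Fin 2 → Fin 2 × Fin 2 → ℝ}
    (hπ : IsProb π) (hχ : IsMarkov χ) : IsProb (mu2 π χ) := by
  refine ⟨fun j => ⟨?_, ?_⟩, ?_⟩
  · exact Finset.sum_nonneg fun i _ => mul_nonneg (hπ.1 i).1 ((hχ i).1 j).1
  · calc ∑ i, π i * χ i j ≤ ∑ i, π i * 1 :=
          Finset.sum_le_sum fun i _ => mul_le_mul_of_nonneg_left ((hχ i).1 j).2 (hπ.1 i).1
      _ = 1 := by simpa using hπ.2
  · calc ∑ j, mu2 π χ j = ∑ i, π i * ∑ j, χ i j := by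
          simp only [mu2, Finset.mul_sum]; exact Finset.sum_comm
      _ = 1 := by simpa [fun i => (hχ i).2] using hπ.2

lemma kapF_eq_kapM_mu2 {π : Fin 2 → ℝ} (χ : Fin 2 → Fin 2 × Fin 2 → ℝ) (hπ : IsProb π) :
    kapF π χ = kapM (mu2 π χ) := by
  have hπ0 : π 0 = 1 - π 1 := by
    linarith [show π 0 + π 1 = 1 by simpa [Fin.sum_univ_two] using hπ.2]
  simp only [kapF, kapM, mu2, chi1, chi2, Fin.sum_univ_two, hπ0]
  ring

lemma kapR_eq_mul_kapM (π : Fin 2 → ℝ) (χ : Fin 2 → Fin 2 × Fin 2 → ℝ) :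
    kapR π χ = π 1 * kapM (χ 1) := by
  simp only [kapR, kapM, chi1, chi2]; ring

lemma kapR_le_one {π : Fin 2 → ℝ} {χ : Fin 2 → Fin 2 × Fin 2 → ℝ}
    (hπ : IsProb π) (hχ : IsMarkov χ) : kapR π χ ≤ 1 := by
  obtain ⟨hπ₀, hπ₁⟩ := hπ.1 1
  obtain ⟨hκ₀, hκ₁⟩ := (hχ 1).kapM_mem_Icc
  rw [kapR_eq_mul_kapM]
  nlinarith

lemma kapF_le_kapR {π : Fin 2 → ℝ} {χ : Fin 2 → Fin 2 × Fin 2 → ℝ}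
    (hπ : IsProb π) (hχ : chi1 χ 0 0 ≤ chi2 χ 0 0) : kapF π χ ≤ kapR π χ := by
  simp only [kapF, kapR]
  nlinarith [mul_nonneg (sub_nonneg.2 (hπ.1 1).2) (sub_nonneg.2 hχ)]

def embPrior : Fin 2 → ℝ := ![0, 1]

/-- The class-`0` law is irrelevant under `embPrior`; it is uniform so that the constraint of
`P₂,≤` holds. -/
def embKernel (q : Fin 2 × Fin 2 → ℝ) : Fin 2 → Fin 2 × Fin 2 → ℝ := ![fun _ => 1 / 4, q]

lemma isProb_embPrior : IsProb embPrior :=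
  ⟨fun i => by fin_cases i <;> norm_num [embPrior], by simp [embPrior]⟩

lemma isMarkov_embKernel {q : Fin 2 × Fin 2 → ℝ} (hq : IsProb q) : IsMarkov (embKernel q) := by
  intro i
  fin_cases i
  · exact ⟨fun _ => by norm_num [embKernel], by norm_num [embKernel]⟩
  · exact hq

lemma mu2_embKernel (q : Fin 2 × Fin 2 → ℝ) : mu2 embPrior (embKernel q) = q := by
  funext j
  simp [mu2, Fin.sum_univ_two, embPrior, embKernel]

lemma kapF_embKernel (q : Fin 2 × Fin 2 → ℝ) : kapF embPrior (embKernel q) = kapM q := by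
  simp [kapF, kapM, chi1, chi2, embPrior, embKernel]

lemma kapR_embKernel (q : Fin 2 × Fin 2 → ℝ) : kapR embPrior (embKernel q) = kapM q := by
  simp [kapR, kapM, chi1, chi2, embPrior, embKernel]

lemma chi1_embKernel_le_chi2 (q : Fin 2 × Fin 2 → ℝ) :
    chi1 (embKernel q) 0 0 ≤ chi2 (embKernel q) 0 0 := by
  simp [chi1, chi2, embKernel]

section Transfer

variable {β : ℝ} {n : ℕ} {Δ Δ' : ((Fin 2 × Fin 2) → ℕ) → ℝ}

lemma lowerCBF_iff_lowerCBM : LowerCBF β n Δ ↔ LowerCBM β n Δ := by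
  refine ⟨fun h q hq => ?_, fun h π χ hπ hχ => ?_⟩
  · simpa [mu2_embKernel, kapF_embKernel] using
      h embPrior (embKernel q) isProb_embPrior (isMarkov_embKernel hq)
  · rw [kapF_eq_kapM_mu2 χ hπ]
    exact h _ (isProb_mu2 hπ hχ)

lemma worseF_iff_worseM : WorseF n Δ Δ' ↔ WorseM n Δ Δ' := by
  refine ⟨fun h q hq t ht => ?_, fun h π χ hπ hχ t ht => ?_⟩
  · simpa [mu2_embKernel] using h embPrior (embKernel q) isProb_embPrior
      (isMarkov_embKernel hq) t (by rwa [kapF_embKernel])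
  · rw [kapF_eq_kapM_mu2 χ hπ] at ht
    exact h _ (isProb_mu2 hπ hχ) t ht

lemma strictlyWorseF_iff_strictlyWorseM : StrictlyWorseF n Δ Δ' ↔ StrictlyWorseM n Δ Δ' := by
  rw [StrictlyWorseF, StrictlyWorseM, worseF_iff_worseM]
  refine and_congr_right fun _ => ⟨?_, ?_⟩
  · rintro ⟨π, χ, hπ, hχ, t, ht, hlt⟩
    exact ⟨_, isProb_mu2 hπ hχ, t, kapF_eq_kapM_mu2 χ hπ ▸ ht, hlt⟩
  · rintro ⟨q, hq, t, ht, hlt⟩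
    exact ⟨embPrior, embKernel q, isProb_embPrior, isMarkov_embKernel hq, t,
      by rwa [kapF_embKernel], by rwa [mu2_embKernel]⟩

lemma admissibleF_iff_admissibleM : AdmissibleF β n Δ ↔ AdmissibleM β n Δ := by
  simp only [AdmissibleF, AdmissibleM, lowerCBF_iff_lowerCBM, strictlyWorseF_iff_strictlyWorseM]

lemma lowerCBM_of_lowerCBR (h : LowerCBR β n Δ) : LowerCBM β n Δ := fun q hq => by
  simpa [mu2_embKernel, kapR_embKernel] using h embPrior (embKernel q) isProb_embPrior
    (isMarkov_embKernel hq) (chi1_embKernel_le_chi2 q)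

lemma lowerCBR_of_lowerCBM (h : LowerCBM β n Δ) : LowerCBR β n Δ := fun _ χ hπ hχ hle =>
  (h _ (isProb_mu2 hπ hχ)).trans <| mProb_mono (isProb_mu2 hπ hχ) fun _ hk =>
    le_trans hk <| kapF_eq_kapM_mu2 χ hπ ▸ kapF_le_kapR hπ hle

lemma worseM_of_worseR (h : WorseR n Δ Δ') : WorseM n Δ Δ' := fun q hq t ht => by
  simpa [mu2_embKernel] using h embPrior (embKernel q) isProb_embPrior (isMarkov_embKernel hq)
    (chi1_embKernel_le_chi2 q) t (by rwa [kapR_embKernel])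

end Transfer

lemma AdmissibleM.mProb_ge_eq_of_worseM {β : ℝ} {n : ℕ} {Δ Δ' : ((Fin 2 × Fin 2) → ℕ) → ℝ}
    (hΔ : AdmissibleM β n Δ) (hΔ' : LowerCBM β n Δ') (hW : WorseM n Δ Δ')
    {q : Fin 2 × Fin 2 → ℝ} (hq : IsProb q) {t : ℝ} (ht : t < kapM q) :
    mProb n q {k | t ≤ Δ k} = mProb n q {k | t ≤ Δ' k} :=
  (hW q hq t ht).antisymm <| not_lt.1 fun hlt => hΔ.2 ⟨Δ', hΔ', hW, q, hq, t, ht, hlt⟩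

/-- Along the segment from the point mass at `(0, 1)` (where `kapM = 1 > t`) to `q`, the two
sides are polynomials agreeing near the start, hence everywhere. -/
lemma mProb_eq_of_forall_lt_kapM {n : ℕ} {S T : Set ((Fin 2 × Fin 2) → ℕ)} {t : ℝ} (ht : t < 1)
    (h : ∀ q, IsProb q → t < kapM q → mProb n q S = mProb n q T)
    {q : Fin 2 × Fin 2 → ℝ} (hq : IsProb q) : mProb n q S = mProb n q T := by
  set δ : Fin 2 × Fin 2 → ℝ := Pi.single (0, 1) 1
  have hnear : ∀ s ∈ Set.Ioo 0 (min 1 ((1 - t) / 2)),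
      mProb n (δ + s • (q - δ)) S = mProb n (δ + s • (q - δ)) T := by
    rintro s ⟨hs₀, hs⟩
    refine h _ ((isProb_single _).add_smul_sub hq ⟨hs₀.le, (hs.trans_le (min_le_left _ _)).le⟩) ?_
    rw [kapM_add_smul, kapM_sub, kapM_single]
    nlinarith [hq.kapM_mem_Icc.1, hs.trans_le (min_le_right _ _)]
  simpa using mProb_line_eq_of_eqOn_Ioo n δ (q - δ) S T (lt_min one_pos (by linarith)) hnear 1

lemma AdmissibleM.admissibleR {β : ℝ} {n : ℕ} {Δ : ((Fin 2 × Fin 2) → ℕ) → ℝ}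
    (hΔ : AdmissibleM β n Δ) : AdmissibleR β n Δ := by
  refine ⟨lowerCBR_of_lowerCBM hΔ.1, ?_⟩
  rintro ⟨Δ', hΔ', hW, π, χ, hπ, hχ, -, t, ht, hlt⟩
  refine hlt.ne <| mProb_eq_of_forall_lt_kapM (ht.trans_le (kapR_le_one hπ hχ))
    (fun q hq htq => ?_) (isProb_mu2 hπ hχ)
  exact hΔ.mProb_ge_eq_of_worseM (lowerCBM_of_lowerCBR hΔ') (worseM_of_worseR hW) hq htq

theorem stmt_2_general (β : ℝ) (n : ℕ)
    (Δ : ((Fin 2 × Fin 2) → ℕ) → ℝ) :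
    (AdmissibleM β n Δ ∨ AdmissibleF β n Δ) →
      AdmissibleM β n Δ ∧ AdmissibleF β n Δ ∧ AdmissibleR β n Δ := by
  intro h
  have hM : AdmissibleM β n Δ := h.elim id admissibleF_iff_admissibleM.1
  exact ⟨hM, admissibleF_iff_admissibleM.2 hM, hM.admissibleR⟩

/-- Theorem 1.C: if the lower β-confidence bound `Δ` is admissible for one of the
estimation problems `(M, q ↦ q₀₁ - q₁₀)` and `(P₂, kapF)`, then it is admissible for
the other, and also for `(P₂≤, kapR)`. -/
theorem stmt_2 (β : ℝ) (hβ : β ∈ Set.Icc (0:ℝ) 1) (n : ℕ) (hn : 0 < n)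
    (Δ : ((Fin 2 × Fin 2) → ℕ) → ℝ)
    (hΔ : ∀ k, (∑ x, k x) = n → Δ k ∈ Set.Icc (-1:ℝ) 1)
    (hcb : LowerCBM β n Δ) :
    (AdmissibleM β n Δ ∨ AdmissibleF β n Δ) →
      AdmissibleM β n Δ ∧ AdmissibleF β n Δ ∧ AdmissibleR β n Δ :=
  stmt_2_general β n Δ

end
end

section
/- Lemma (set C). Let q ∈ Prob({0,1}²) and μ := μ₂. Then the set C := {(π₁, χ^{(2)}_{1|1} − χ^{(1)}_{1|1}) : (π,χ) ∈ Θ₂, μ(π,χ) = q} is nonempty and equals the set of all (Pr, ΔSe) ∈ [0,1] × [−1,1] satisfying max(−q₁₀, q₀₁ − q₁₀ + Pr − 1) ≤ Pr·ΔSe ≤ min(q₀₁, q₀₁ − q₁₀ + 1 − Pr). -/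
open scoped BigOperators

noncomputable section

/-!
Put `c := π₁ χ_{·|1}`. A decomposition `μ₂(π,χ) = q` with `0 < π₁ < 1` is the same thing as a
sub-density `0 ≤ c ≤ q` of total mass `Pr = π₁` (recover `χ_{·|1} = c/Pr` and
`χ_{·|0} = (q - c)/(1 - Pr)`), and then `Pr·ΔSe = c₀₁ - c₁₀`. The stated inequalities are exactly
the solvability conditions of this linear system for `c`: take `c₀₁` as small as the constraints
allow, `c₁₀ = c₀₁ - Pr·ΔSe`, and spread the remaining mass over the diagonal. At `Pr = 0` the
component `χ_{·|1}` is unconstrained, so `ΔSe` is arbitrary in `[-1,1]`; at `Pr = 1` it equals `q`.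
-/

lemma Fintype.sum_fin_two_prod {M : Type*} [AddCommMonoid M] (f : Fin 2 × Fin 2 → M) :
    ∑ j, f j = f (0, 0) + f (0, 1) + f (1, 0) + f (1, 1) := by
  simp [Fintype.sum_prod_type, Fin.sum_univ_two, add_assoc]

lemma Prod.forall_fin_two {p : Fin 2 × Fin 2 → Prop} :
    (∀ j, p j) ↔ p (0, 0) ∧ p (0, 1) ∧ p (1, 0) ∧ p (1, 1) := by
  simp [Prod.forall, Fin.forall_fin_two, and_assoc]

lemma IsProb.sum_fin_two_prod {q : Fin 2 × Fin 2 → ℝ} (hq : IsProb q) :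
    q (0, 0) + q (0, 1) + q (1, 0) + q (1, 1) = 1 :=
  Fintype.sum_fin_two_prod q ▸ hq.2

lemma IsProb.sub_mem_Icc {ν : Fin 2 × Fin 2 → ℝ} (hν : IsProb ν) :
    ν (0, 1) - ν (1, 0) ∈ Set.Icc (-1) 1 := by
  obtain ⟨⟨h00, -⟩, ⟨h01, -⟩, ⟨h10, -⟩, ⟨h11, -⟩⟩ := Prod.forall_fin_two.1 hν.1
  have := hν.sum_fin_two_prod
  constructor <;> linarith

lemma IsProb.nonneg {X : Type*} [Fintype X] {p : X → ℝ} (hp : IsProb p) : 0 ≤ p :=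
  fun x => (hp.1 x).1

lemma isProb_inv_sum_smul {X : Type*} [Fintype X] {p : X → ℝ} (hp : 0 ≤ p)
    (hsum : 0 < ∑ x, p x) : IsProb ((∑ x, p x)⁻¹ • p) := by
  refine ⟨fun x => ⟨?_, ?_⟩, ?_⟩
  · exact mul_nonneg (inv_nonneg.2 hsum.le) (hp x)
  · rw [Pi.smul_apply, smul_eq_mul, inv_mul_le_iff₀ hsum, mul_one]
    exact Finset.single_le_sum (fun y _ => hp y) (Finset.mem_univ x)
  · simp only [Pi.smul_apply, smul_eq_mul, ← Finset.mul_sum]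
    exact inv_mul_cancel₀ hsum.ne'

lemma isProb_fin_two {P : ℝ} (hP : P ∈ Set.Icc 0 1) : IsProb ![1 - P, P] := by
  refine ⟨fun i => ?_, by simp⟩
  fin_cases i <;> simp <;> constructor <;> linarith [hP.1, hP.2]

lemma mu2_apply (π : Fin 2 → ℝ) (χ : Fin 2 → Fin 2 × Fin 2 → ℝ) (j : Fin 2 × Fin 2) :
    mu2 π χ j = π 0 * χ 0 j + π 1 * χ 1 j :=
  Fin.sum_univ_two _

lemma mu2_const {π : Fin 2 → ℝ} (hπ : IsProb π) (ν : Fin 2 × Fin 2 → ℝ) :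
    mu2 π (fun _ => ν) = ν := by
  ext j
  rw [mu2_apply, ← add_mul, ← Fin.sum_univ_two π, hπ.2, one_mul]

lemma chi2_sub_chi1 (χ : Fin 2 → Fin 2 × Fin 2 → ℝ) (i : Fin 2) :
    chi2 χ i 1 - chi1 χ i 1 = χ i (0, 1) - χ i (1, 0) := by
  simp only [chi1, chi2]
  ring

/-- `(P, D) ∈ C`, where `P` is `Pr` and `D` is `ΔSe`. -/
def IsRealizable (q : Fin 2 × Fin 2 → ℝ) (P D : ℝ) : Prop :=
  ∃ π : Fin 2 → ℝ, ∃ χ : Fin 2 → Fin 2 × Fin 2 → ℝ,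
    IsProb π ∧ IsMarkov χ ∧ mu2 π χ = q ∧ π 1 = P ∧ chi2 χ 1 1 - chi1 χ 1 1 = D

section Subdensity

variable {q : Fin 2 × Fin 2 → ℝ}

lemma subdensity_of_mu2_eq {π : Fin 2 → ℝ} {χ : Fin 2 → Fin 2 × Fin 2 → ℝ} (hπ : IsProb π)
    (hχ : IsMarkov χ) (hμ : mu2 π χ = q) :
    0 ≤ π 1 • χ 1 ∧ π 1 • χ 1 ≤ q ∧ ∑ j, (π 1 • χ 1) j = π 1 := by
  have h0 : 0 ≤ π 0 • χ 0 := smul_nonneg (hπ.nonneg 0) (hχ 0).nonneg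
  refine ⟨smul_nonneg (hπ.nonneg 1) (hχ 1).nonneg, fun j => ?_, ?_⟩
  · rw [← hμ, mu2_apply]
    exact le_add_of_nonneg_left (h0 j)
  · simp only [Pi.smul_apply, smul_eq_mul, ← Finset.mul_sum, (hχ 1).2, mul_one]

theorem exists_subdensity_iff (hq : IsProb q) (P s : ℝ) :
    (∃ c : Fin 2 × Fin 2 → ℝ, 0 ≤ c ∧ c ≤ q ∧ ∑ j, c j = P ∧ c (0, 1) - c (1, 0) = s) ↔
      |s| ≤ P ∧ max (-q (1, 0)) (q (0, 1) - q (1, 0) + P - 1) ≤ s ∧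
        s ≤ min (q (0, 1)) (q (0, 1) - q (1, 0) + 1 - P) := by
  have hq1 := hq.sum_fin_two_prod
  obtain ⟨hq00, hq01, hq10, hq11⟩ := Prod.forall_fin_two.1 fun j => (hq.1 j).1
  simp only [abs_le, max_le_iff, le_min_iff]
  constructor
  · rintro ⟨c, hc0, hcq, hsum, rfl⟩
    rw [Fintype.sum_fin_two_prod] at hsum
    simp only [Pi.le_def, Pi.zero_apply, Prod.forall_fin_two] at hc0 hcq
    refine ⟨⟨?_, ?_⟩, ⟨?_, ?_⟩, ?_, ?_⟩ <;> linarith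
  · rintro ⟨⟨hsP, hPs⟩, ⟨hs10, hsP1⟩, hs01, hsP2⟩
    -- `a = c₀₁` is the least value allowed by `c₀₁ ≥ 0`, `c₁₀ = a - s ≥ 0` and
    -- `c₀₀ + c₁₁ = P - (2a - s) ≤ q₀₀ + q₁₁`
    set a := max (max 0 s) ((P - q (0, 0) - q (1, 1) + s) / 2)
    have ha0 : 0 ≤ a := (le_max_left _ _).trans (le_max_left _ _)
    have has : s ≤ a := (le_max_right _ _).trans (le_max_left _ _)
    have haP : (P - q (0, 0) - q (1, 1) + s) / 2 ≤ a := le_max_right _ _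
    have haq01 : a ≤ q (0, 1) := max_le (max_le hq01 hs01) (by linarith)
    have haq10 : a ≤ q (1, 0) + s := max_le (max_le (by linarith) (by linarith)) (by linarith)
    have haP2 : a ≤ (P + s) / 2 := max_le (max_le (by linarith) (by linarith)) (by linarith)
    set r := P - (2 * a - s)
    refine ⟨fun j => ![![min r (q (0, 0)), a], ![a - s, r - min r (q (0, 0))]] j.1 j.2,
      Prod.forall_fin_two.2 ?_, Prod.forall_fin_two.2 ?_, ?_, ?_⟩
    · simp only [Pi.zero_apply, Matrix.cons_val_zero, Matrix.cons_val_one]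
      refine ⟨le_min ?_ hq00, ha0, ?_, ?_⟩ <;> linarith [min_le_left r (q (0, 0))]
    · simp only [Matrix.cons_val_zero, Matrix.cons_val_one]
      refine ⟨min_le_right _ _, haq01, by linarith, ?_⟩
      linarith [le_min (by linarith : r - q (1, 1) ≤ r) (by linarith : r - q (1, 1) ≤ q (0, 0))]
    · simp only [Fintype.sum_fin_two_prod, Matrix.cons_val_zero, Matrix.cons_val_one]
      ring
    · simp only [Matrix.cons_val_zero, Matrix.cons_val_one]
      ring

end Subdensity

section Realizable

variable {q : Fin 2 × Fin 2 → ℝ}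

lemma isRealizable_const (hq : IsProb q) {P : ℝ} (hP : P ∈ Set.Icc 0 1) :
    IsRealizable q P (q (0, 1) - q (1, 0)) :=
  ⟨_, fun _ => q, isProb_fin_two hP, fun _ => hq, mu2_const (isProb_fin_two hP) q, by simp,
    chi2_sub_chi1 _ 1⟩

lemma isRealizable_zero (hq : IsProb q) {D : ℝ} (hD : D ∈ Set.Icc (-1) 1) :
    IsRealizable q 0 D := by
  set ν : Fin 2 × Fin 2 → ℝ := fun j => ![![0, (1 + D) / 2], ![(1 - D) / 2, 0]] j.1 j.2
  have hν : IsProb ν := by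
    refine ⟨Prod.forall_fin_two.2 ?_, ?_⟩
    · simp only [ν, Matrix.cons_val_zero, Matrix.cons_val_one]
      refine ⟨?_, ?_, ?_, ?_⟩ <;> constructor <;> linarith [hD.1, hD.2]
    · simp only [ν, Fintype.sum_fin_two_prod, Matrix.cons_val_zero, Matrix.cons_val_one]
      ring
  refine ⟨![1, 0], ![q, ν], ?_, ?_, ?_, by simp, ?_⟩
  · simpa using isProb_fin_two (P := 0) (by simp)
  · intro i
    fin_cases i
    exacts [hq, hν]
  · ext j
    simp [mu2_apply]
  · rw [chi2_sub_chi1]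
    simp only [ν, Matrix.cons_val_zero, Matrix.cons_val_one]
    ring

lemma isRealizable_of_subdensity (hq : IsProb q) {c : Fin 2 × Fin 2 → ℝ} (hc0 : 0 ≤ c)
    (hcq : c ≤ q) (hP0 : 0 < ∑ j, c j) (hP1 : ∑ j, c j < 1) :
    IsRealizable q (∑ j, c j) ((c (0, 1) - c (1, 0)) / ∑ j, c j) := by
  set P := ∑ j, c j
  have hqc : ∑ j, (q - c) j = 1 - P := by
    simp only [Pi.sub_apply, Finset.sum_sub_distrib, hq.2, P]
  refine ⟨![1 - P, P], ![(1 - P)⁻¹ • (q - c), P⁻¹ • c], isProb_fin_two ⟨hP0.le, hP1.le⟩,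
    fun i => ?_, ?_, by simp, ?_⟩
  · fin_cases i
    · have := isProb_inv_sum_smul (sub_nonneg.2 hcq) (hqc ▸ sub_pos.2 hP1)
      rwa [hqc] at this
    · exact isProb_inv_sum_smul hc0 hP0
  · ext j
    have : 1 - P ≠ 0 := (sub_pos.2 hP1).ne'
    simp only [mu2_apply, Matrix.cons_val_zero, Matrix.cons_val_one, Pi.smul_apply,
      Pi.sub_apply, smul_eq_mul]
    field_simp
    ring
  · simp only [chi2_sub_chi1, Matrix.cons_val_one, Matrix.cons_val_zero, Pi.smul_apply,
      smul_eq_mul]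
    ring

theorem isRealizable_iff (hq : IsProb q) (P D : ℝ) :
    IsRealizable q P D ↔ P ∈ Set.Icc 0 1 ∧ D ∈ Set.Icc (-1) 1 ∧
      max (-q (1, 0)) (q (0, 1) - q (1, 0) + P - 1) ≤ P * D ∧
      P * D ≤ min (q (0, 1)) (q (0, 1) - q (1, 0) + 1 - P) := by
  constructor
  · rintro ⟨π, χ, hπ, hχ, hμ, rfl, rfl⟩
    obtain ⟨hc0, hcq, hsum⟩ := subdensity_of_mu2_eq hπ hχ hμ
    have hD : π 1 * (chi2 χ 1 1 - chi1 χ 1 1) = (π 1 • χ 1) (0, 1) - (π 1 • χ 1) (1, 0) := by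
      simp only [chi2_sub_chi1, Pi.smul_apply, smul_eq_mul]
      ring
    rw [hD, chi2_sub_chi1]
    exact ⟨hπ.1 1, (hχ 1).sub_mem_Icc,
      ((exists_subdensity_iff hq _ _).1 ⟨_, hc0, hcq, hsum, rfl⟩).2⟩
  · rintro ⟨hP, hD, hlo, hhi⟩
    rcases hP.1.eq_or_lt with rfl | hP0
    · exact isRealizable_zero hq hD
    rcases hP.2.eq_or_lt with rfl | hP1
    · have : D = q (0, 1) - q (1, 0) := by
        linarith [le_max_right (-q (1, 0)) (q (0, 1) - q (1, 0) + 1 - 1),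
          min_le_right (q (0, 1)) (q (0, 1) - q (1, 0) + 1 - 1)]
      exact this ▸ isRealizable_const hq hP
    have hPD : |P * D| ≤ P := by
      rw [abs_mul, abs_of_pos hP0]
      exact mul_le_of_le_one_right hP0.le (abs_le.2 hD)
    obtain ⟨c, hc0, hcq, rfl, hs⟩ := (exists_subdensity_iff hq _ _).2 ⟨hPD, hlo, hhi⟩
    convert isRealizable_of_subdensity hq hc0 hcq hP0 hP1
    rw [hs, mul_div_cancel_left₀ _ hP0.ne']

end Realizable

/-- Lemma (set C): the set of pairs `(Pr, ΔSe)` compatible with `q`. -/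
theorem stmt_9 (q : Fin 2 × Fin 2 → ℝ) (hq : IsProb q) :
    Set.Nonempty {x : ℝ × ℝ |
        ∃ π : Fin 2 → ℝ, ∃ χ : Fin 2 → Fin 2 × Fin 2 → ℝ,
          IsProb π ∧ IsMarkov χ ∧ mu2 π χ = q ∧
          x = (π 1, chi2 χ 1 1 - chi1 χ 1 1)} ∧
    {x : ℝ × ℝ |
        ∃ π : Fin 2 → ℝ, ∃ χ : Fin 2 → Fin 2 × Fin 2 → ℝ,
          IsProb π ∧ IsMarkov χ ∧ mu2 π χ = q ∧
          x = (π 1, chi2 χ 1 1 - chi1 χ 1 1)} =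
    {x : ℝ × ℝ |
        x.1 ∈ Set.Icc (0:ℝ) 1 ∧ x.2 ∈ Set.Icc (-1:ℝ) 1 ∧
        max (-q (1, 0)) (q (0, 1) - q (1, 0) + x.1 - 1) ≤ x.1 * x.2 ∧
        x.1 * x.2 ≤ min (q (0, 1)) (q (0, 1) - q (1, 0) + 1 - x.1)} := by
  have hC : {x : ℝ × ℝ | ∃ π : Fin 2 → ℝ, ∃ χ : Fin 2 → Fin 2 × Fin 2 → ℝ,
      IsProb π ∧ IsMarkov χ ∧ mu2 π χ = q ∧ x = (π 1, chi2 χ 1 1 - chi1 χ 1 1)} =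
      {x | IsRealizable q x.1 x.2} := by
    ext ⟨P, D⟩
    simp only [Set.mem_ofPred_eq, IsRealizable, Prod.mk.injEq, eq_comm]
  rw [hC]
  exact ⟨⟨(1, _), isRealizable_const hq (by simp)⟩, Set.ext fun x => isRealizable_iff hq x.1 x.2⟩

end
end
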